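/- Let φ : ℝ^n → ℝ^n be cyclically monotone, odd (φ(−x) = −φ(x) for all x) with φ(0) = 0, let θ : ℤ → ℝ^n be a finitely supported sequence, and let τ ∈ ℤ. Then |∑_{t ∈ ℤ} ⟨θ(t+τ), φ(θ(t))⟩| ≤ ∑_{t ∈ ℤ} ⟨θ(t), φ(θ(t))⟩. -/

import Mathlib

/-!
Splitting `ℤ` into residue classes modulo `τ`, the sum `∑ₜ ⟪θ t - θ (t + τ), φ (θ t)⟫` becomes a
sum over the chains `k ↦ θ (r + k τ)`. A finitely supported chain, closed up through `0` (where
`φ` vanishes), is a cycle, so by cyclic monotonicity each chain contributes a nonnegative amount;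
this is the upper bound. For the lower bound, oddness of `φ` allows flipping the sign of every
other element of a chain, which turns `⟪x k - x (k + 1), φ (x k)⟫` into `⟪x k + x (k + 1), φ (x k)⟫`.
-/

open RealInnerProductSpace

/-- A map `φ : ℝⁿ → ℝⁿ` is cyclically monotone if for every finite cyclic sequence
`x_0, …, x_N` with `x_{N+1} = x_0` one has `∑ₖ ⟨φ(x k), x k - x (k+1)⟩ ≥ 0`. -/
def CyclicallyMonotone {n : ℕ}
    (φ : EuclideanSpace ℝ (Fin n) → EuclideanSpace ℝ (Fin n)) : Prop :=
  ∀ (N : ℕ) (x : Fin (N + 1) → EuclideanSpace ℝ (Fin n)),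
    0 ≤ ∑ k : Fin (N + 1), ⟪φ (x k), x k - x (k + 1)⟫

open Function

section Chains

variable {E : Type*} [Zero E]

def ChainNonneg (F : E → E → ℝ) : Prop :=
  ∀ x : ℤ → E, HasFiniteSupport x → 0 ≤ ∑ᶠ k, F (x k) (x (k + 1))

namespace ChainNonneg

variable {F : E → E → ℝ}

theorem finsum_natShift_nonneg (hF : ChainNonneg F) (hF0 : ∀ v, F 0 v = 0)
    {θ : ℤ → E} (hθ : HasFiniteSupport θ) (n : ℕ) [NeZero n] :
    0 ≤ ∑ᶠ t, F (θ t) (θ (t + n)) := by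
  have hsupp : HasFiniteSupport fun t => F (θ t) (θ (t + n)) :=
    hθ.subset fun t ht hθt => ht (by simp [hθt, hF0])
  let e : Fin n × ℤ ≃ ℤ := (Equiv.prodComm _ _).trans (Int.divModEquiv n).symm
  rw [← finsum_comp_equiv e,
    finsum_curry (fun p => F (θ (e p)) (θ (e p + n))) (hsupp.comp_of_injective e.injective)]
  refine finsum_nonneg fun r => ?_
  have hchain := hF (fun q => θ (q * n + r)) (hθ.comp_of_injective fun q₁ q₂ h => by
    simpa [NeZero.ne n] using h)
  refine hchain.trans_eq (finsum_congr fun q => ?_)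
  have he : e (r, q) = q * n + r := rfl
  rw [he, add_one_mul, add_right_comm]

theorem finsum_shift_nonneg (hF : ChainNonneg F) (hF0 : ∀ v, F 0 v = 0)
    {θ : ℤ → E} (hθ : HasFiniteSupport θ) {τ : ℤ} (hτ : τ ≠ 0) :
    0 ≤ ∑ᶠ t, F (θ t) (θ (t + τ)) := by
  obtain ⟨m, rfl | rfl⟩ := Int.eq_nat_or_neg τ
  · have : NeZero m := ⟨by simpa using hτ⟩
    exact hF.finsum_natShift_nonneg hF0 hθ m
  · have : NeZero m := ⟨by simpa using hτ⟩
    -- reflecting `θ` turns a backward shift into a forward one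
    have hrefl := hF.finsum_natShift_nonneg hF0 (hθ.comp_of_injective neg_injective) m
    rw [← finsum_comp_equiv (Equiv.neg ℤ)] at hrefl
    refine hrefl.trans_eq (finsum_congr fun t => ?_)
    simp [add_comm]

end ChainNonneg

end Chains

section CyclicallyMonotone

variable {n : ℕ} {φ : EuclideanSpace ℝ (Fin n) → EuclideanSpace ℝ (Fin n)}

theorem CyclicallyMonotone.inner_self_apply_nonneg (hφ : CyclicallyMonotone φ) (hφ0 : φ 0 = 0)
    (x : EuclideanSpace ℝ (Fin n)) : 0 ≤ ⟪x, φ x⟫ := by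
  simpa [Fin.sum_univ_two, hφ0, real_inner_comm] using hφ 1 ![x, 0]

theorem CyclicallyMonotone.chainNonneg_inner_sub (hφ : CyclicallyMonotone φ) (hφ0 : φ 0 = 0) :
    ChainNonneg fun u v => ⟪u - v, φ u⟫ := by
  intro x hx
  obtain ⟨a, ha⟩ := hx.bddBelow
  obtain ⟨b, hb⟩ := hx.bddAbove
  set N := (b + 1 - a).toNat
  have hsum : ∑ᶠ k, ⟪x k - x (k + 1), φ (x k)⟫ =
      ∑ j ∈ Finset.range N, ⟪x (a + j) - x (a + j + 1), φ (x (a + j))⟫ := by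
    rw [finsum_eq_sum_of_support_subset _ (s := (Finset.range N).image fun j : ℕ => a + j),
      Finset.sum_image fun _ _ _ _ h => by simpa using h]
    intro k hk
    have hxk : x k ≠ 0 := fun h => hk (by simp [h, hφ0])
    have hak := ha hxk
    have hkb := hb hxk
    simpa using ⟨(k - a).toNat, by omega, by omega⟩
  have hlast : x (a + N) = 0 := by
    by_contra h
    have hNb := hb h
    omega
  have hcyc := hφ N fun j => x (a + j)
  simp only [Fin.sum_univ_castSucc, Fin.coeSucc_eq_succ, Fin.val_succ, Fin.val_castSucc,
    Fin.val_last, hlast, hφ0, inner_zero_left, add_zero] at hcyc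
  rw [hsum, ← Fin.sum_univ_eq_sum_range]
  simpa [real_inner_comm, add_assoc] using hcyc

theorem CyclicallyMonotone.chainNonneg_inner_add (hφ : CyclicallyMonotone φ)
    (hodd : ∀ x, φ (-x) = -φ x) (hφ0 : φ 0 = 0) :
    ChainNonneg fun u v => ⟪u + v, φ u⟫ := by
  intro x hx
  let y : ℤ → EuclideanSpace ℝ (Fin n) := fun k => if Even k then x k else -x k
  have hy : HasFiniteSupport y := hx.subset fun k hk hxk => hk (by simp [y, hxk])
  refine (hφ.chainNonneg_inner_sub hφ0 y hy).trans_eq (finsum_congr fun k => ?_)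
  by_cases hk : Even k
  · have hk1 : ¬Even (k + 1) := Int.even_add_one.not.mpr (not_not.mpr hk)
    simp only [y, hk, hk1, if_true, if_false, sub_neg_eq_add]
  · have hk1 : Even (k + 1) := Int.even_add_one.mpr hk
    simp only [y, hk, hk1, if_true, if_false, hodd, inner_neg_right, ← inner_neg_left, neg_sub,
      sub_neg_eq_add, add_comm]

end CyclicallyMonotone

/-- Lemma 3 (second inequality): for a cyclically monotone and odd `φ` with `φ(0) = 0` and a
finitely supported sequence `θ : ℤ → ℝⁿ`,
`|∑ₜ ⟨θ(t+τ), φ(θ(t))⟩| ≤ ∑ₜ ⟨θ(t), φ(θ(t))⟩` for every shift `τ`. -/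
theorem zames_falb_time_domain_inequality_odd {n : ℕ}
    (φ : EuclideanSpace ℝ (Fin n) → EuclideanSpace ℝ (Fin n))
    (hφ : CyclicallyMonotone φ)
    (hodd : ∀ x, φ (-x) = -φ x) (hφ0 : φ 0 = 0)
    (θ : ℤ → EuclideanSpace ℝ (Fin n)) (hθ : (Function.support θ).Finite)
    (τ : ℤ) :
    |∑ᶠ t : ℤ, ⟪θ (t + τ), φ (θ t)⟫| ≤ ∑ᶠ t : ℤ, ⟪θ t, φ (θ t)⟫ := by
  rcases eq_or_ne τ 0 with rfl | hτ
  · simp only [add_zero]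
    exact (abs_of_nonneg (finsum_nonneg fun t => hφ.inner_self_apply_nonneg hφ0 (θ t))).le
  have hfin (v : ℤ → EuclideanSpace ℝ (Fin n)) : HasFiniteSupport fun t => ⟪v t, φ (θ t)⟫ :=
    hθ.subset fun t ht hθt => ht (by simp [hθt, hφ0])
  have hsub := (hφ.chainNonneg_inner_sub hφ0).finsum_shift_nonneg (by simp [hφ0]) hθ hτ
  have hadd := (hφ.chainNonneg_inner_add hodd hφ0).finsum_shift_nonneg (by simp [hφ0]) hθ hτ
  simp only [inner_sub_left, inner_add_left] at hsub hadd
  rw [finsum_sub_distrib (hfin _) (hfin _)] at hsub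
  rw [finsum_add_distrib (hfin _) (hfin _)] at hadd
  exact abs_le.mpr ⟨by linarith, by linarith⟩
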